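/- Let F be a continuous concave distribution function on [0,∞) with F(0)=0 that is strictly concave on [t₀−2δ, t₀+2δ] for some t₀, δ > 0 with t₀ − 2δ > 0. If G : [0,∞) → ℝ is bounded with sup |G − F| < ε where ε > 0 satisfies 2F(t₀ ± (3/2)δ) > F(t₀ ± δ) + F(t₀ ± 2δ) + 4ε (both sign choices), then the least concave majorant of G over [0,∞) agrees with the least concave majorant of G restricted to [t₀−2δ, t₀+2δ] on the interval [t₀−δ, t₀+δ]. -/

import Mathlib

/-!
Let `ℓ` be the least concave majorant of `G` on `K = [t₀ - 2δ, t₀ + 2δ]` and `L` a supporting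
line of `ℓ` at `x`. On `K` we have `F - ε < G ≤ ℓ ≤ F + ε`, so the convex function `L - F` is at
most `ε` at `x` and at least `-ε` at `t₀ ± 3δ/2`. The gap condition says that `L - F` bends up by
more than `4ε` across `t₀ ± 3δ/2`, which forces `L - F ≥ ε` beyond `t₀ ± 2δ`. Hence `L ≥ F + ε > G`
off `K`, so `L` is a concave majorant of `G` on `[0, ∞)` touching `ℓ` at `x`.
-/

/-- The least concave majorant of `f` on the set `S`, evaluated at `x`. -/
noncomputable def lcmaj (S : Set ℝ) (f : ℝ → ℝ) (x : ℝ) : ℝ :=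
  sInf {y : ℝ | ∃ g : ℝ → ℝ, ConcaveOn ℝ S g ∧ (∀ z ∈ S, f z ≤ g z) ∧ g x = y}

open Set

section Line

variable {S : Set ℝ} (c m x : ℝ)

theorem concaveOn_add_mul_sub (hS : Convex ℝ S) : ConcaveOn ℝ S fun y => c + m * (y - x) :=
  ⟨hS, fun _ _ _ _ a b _ _ hab => le_of_eq <| by
    simp only [smul_eq_mul]; linear_combination (c - m * x) * hab⟩

theorem convexOn_add_mul_sub (hS : Convex ℝ S) : ConvexOn ℝ S fun y => c + m * (y - x) :=
  ⟨hS, fun _ _ _ _ a b _ _ hab => ge_of_eq <| by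
    simp only [smul_eq_mul]; linear_combination (c - m * x) * hab⟩

end Line

theorem ConvexOn.sub_mul_le_of_le_of_le {S : Set ℝ} {f : ℝ → ℝ} (hf : ConvexOn ℝ S f)
    {x y z : ℝ} (hx : x ∈ S) (hz : z ∈ S) (hxy : x ≤ y) (hyz : y ≤ z) :
    (z - x) * f y ≤ (z - y) * f x + (y - x) * f z := by
  rcases hxy.eq_or_lt with rfl | hxy
  · simp
  rcases hyz.eq_or_lt with rfl | hyz
  · simp
  exact hf.secant_mono_aux1 hx hz hxy hyz

theorem ConcaveOn.exists_le_add_mul_sub {S : Set ℝ} {f : ℝ → ℝ} (hf : ConcaveOn ℝ S f)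
    {x : ℝ} (hx : x ∈ interior S) : ∃ m, ∀ y ∈ S, f y ≤ f x + m * (y - x) := by
  have hg : ConvexOn ℝ S (-f) := hf.neg
  refine ⟨-derivWithin (-f) (Ioi x) x, fun y hy => ?_⟩
  rcases lt_trichotomy y x with hyx | rfl | hxy
  · have h := (hg.slope_le_leftDeriv_of_mem_interior hy hx hyx).trans
      (hg.leftDeriv_le_rightDeriv_of_mem_interior hx)
    rw [slope_def_field, div_le_iff₀ (sub_pos.2 hyx)] at h
    simp only [Pi.neg_apply] at h
    linarith
  · simp
  · have h := hg.rightDeriv_le_slope_of_mem_interior hx hy hxy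
    rw [slope_def_field, le_div_iff₀ (sub_pos.2 hxy)] at h
    simp only [Pi.neg_apply] at h
    linarith

theorem ConvexOn.le_of_midpoint_gap {S : Set ℝ} {D : ℝ → ℝ} (hD : ConvexOn ℝ S D)
    {x p q r z ε : ℝ} (hx : x ∈ S) (hz : z ∈ S) (hxp : x ≤ p) (hpq : p < q)
    (hmid : r - q = q - p) (hrz : r ≤ z) (hε : 0 ≤ ε) (hDx : D x ≤ ε) (hDq : -ε ≤ D q)
    (hgap : 2 * D q + 4 * ε < D p + D r) : ε ≤ D z := by
  have hq : q ∈ S := hD.1.ordConnected.out hx hz ⟨by linarith, by linarith⟩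
  have hxq : 0 < q - x := by linarith
  have hleft := hD.sub_mul_le_of_le_of_le hx hq hxp hpq.le
  have hright := hD.sub_mul_le_of_le_of_le hq hz (by linarith) hrz
  have hdrop : D p - D q ≤ 2 * ε := by
    refine le_of_mul_le_mul_left ?_ hxq
    nlinarith [mul_le_mul_of_nonneg_left (show D x - D q ≤ 2 * ε by linarith) (sub_pos.2 hpq).le]
  have hrise : D r ≤ D z := by
    nlinarith [mul_nonneg (sub_nonneg.2 hrz) (show 0 ≤ D r - D q by linarith)]
  linarith

theorem ConcaveOn.add_le_of_midpoint_gap {S : Set ℝ} {F : ℝ → ℝ} (hF : ConcaveOn ℝ S F)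
    {c m x p q r z ε : ℝ} (hx : x ∈ S) (hz : z ∈ S) (hxp : x ≤ p) (hpq : p < q)
    (hmid : r - q = q - p) (hrz : r ≤ z) (hε : 0 ≤ ε) (hFx : c ≤ F x + ε)
    (hFq : F q - ε ≤ c + m * (q - x)) (hgap : F p + F r + 4 * ε < 2 * F q) :
    F z + ε ≤ c + m * (z - x) := by
  have hD := (convexOn_add_mul_sub c m x hF.1).sub hF
  have hline : m * (r - q) = m * (q - p) := by rw [hmid]
  have h := hD.le_of_midpoint_gap hx hz hxp hpq hmid hrz hε
    (by simp only [Pi.sub_apply]; linarith) (by simp only [Pi.sub_apply]; linarith)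
    (by simp only [Pi.sub_apply]; linarith)
  simp only [Pi.sub_apply] at h
  linarith

theorem ConcaveOn.add_le_of_midpoint_gap_left {S : Set ℝ} {F : ℝ → ℝ} (hF : ConcaveOn ℝ S F)
    {c m x p q r z ε : ℝ} (hx : x ∈ S) (hz : z ∈ S) (hpx : p ≤ x) (hqp : q < p)
    (hmid : q - r = p - q) (hzr : z ≤ r) (hε : 0 ≤ ε) (hFx : c ≤ F x + ε)
    (hFq : F q - ε ≤ c + m * (q - x)) (hgap : F p + F r + 4 * ε < 2 * F q) :
    F z + ε ≤ c + m * (z - x) := by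
  have hneg : ∀ y, (F ∘ ⇑(-LinearMap.id : ℝ →ₗ[ℝ] ℝ)) (-y) = F y := fun y => by simp
  have h := (hF.comp_linearMap (-LinearMap.id)).add_le_of_midpoint_gap (c := c) (m := -m)
    (x := -x) (p := -p) (q := -q) (r := -r) (z := -z) (by simpa) (by simpa) (by linarith)
    (by linarith) (by linarith) (by linarith) hε (by rwa [hneg]) (by rw [hneg]; linarith)
    (by rwa [hneg, hneg, hneg])
  rw [hneg] at h
  linarith

section LeastConcaveMajorant

variable {S K : Set ℝ} {f g : ℝ → ℝ} {x : ℝ}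

theorem lcmaj_le (hx : x ∈ S) (hg : ConcaveOn ℝ S g) (hfg : ∀ z ∈ S, f z ≤ g z) :
    lcmaj S f x ≤ g x :=
  csInf_le ⟨f x, by rintro _ ⟨g', -, hfg', rfl⟩; exact hfg' x hx⟩ ⟨g, hg, hfg, rfl⟩

theorem le_lcmaj (hx : x ∈ S) (hg : ConcaveOn ℝ S g) (hfg : ∀ z ∈ S, f z ≤ g z) :
    f x ≤ lcmaj S f x :=
  le_csInf ⟨g x, g, hg, hfg, rfl⟩ (by rintro _ ⟨g', -, hfg', rfl⟩; exact hfg' x hx)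

theorem concaveOn_lcmaj (hg : ConcaveOn ℝ S g) (hfg : ∀ z ∈ S, f z ≤ g z) :
    ConcaveOn ℝ S (lcmaj S f) := by
  refine ⟨hg.1, fun u hu v hv a b ha hb hab => le_csInf ⟨_, g, hg, hfg, rfl⟩ ?_⟩
  rintro _ ⟨g', hg', hfg', rfl⟩
  calc a • lcmaj S f u + b • lcmaj S f v ≤ a • g' u + b • g' v := by
        gcongr
        exacts [lcmaj_le hu hg' hfg', lcmaj_le hv hg' hfg']
    _ ≤ g' (a • u + b • v) := hg'.2 hu hv ha hb hab

theorem lcmaj_le_lcmaj (hK : Convex ℝ K) (hKS : K ⊆ S) (hx : x ∈ K) (hg : ConcaveOn ℝ S g)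
    (hfg : ∀ z ∈ S, f z ≤ g z) : lcmaj K f x ≤ lcmaj S f x := by
  refine le_csInf ⟨_, g, hg, hfg, rfl⟩ ?_
  rintro _ ⟨g', hg', hfg', rfl⟩
  exact lcmaj_le hx (hg'.subset hKS hK) fun z hz => hfg' z (hKS hz)

theorem lcmaj_eq_lcmaj_of_supporting_line (hK : Convex ℝ K) (hKS : K ⊆ S)
    (hx : x ∈ interior K) (hg : ConcaveOn ℝ S g) (hfg : ∀ z ∈ S, f z ≤ g z)
    (htail : ∀ m : ℝ, (∀ y ∈ K, lcmaj K f y ≤ lcmaj K f x + m * (y - x)) →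
      ∀ y ∈ S, y ∉ K → f y ≤ lcmaj K f x + m * (y - x)) :
    lcmaj S f x = lcmaj K f x := by
  have hgK : ConcaveOn ℝ K g := hg.subset hKS hK
  have hfgK : ∀ z ∈ K, f z ≤ g z := fun z hz => hfg z (hKS hz)
  obtain ⟨m, hm⟩ := (concaveOn_lcmaj hgK hfgK).exists_le_add_mul_sub hx
  have hline : ∀ y ∈ S, f y ≤ lcmaj K f x + m * (y - x) := by
    intro y hy
    by_cases hyK : y ∈ K
    · exact (le_lcmaj hyK hgK hfgK).trans (hm y hyK)
    · exact htail m hm y hy hyK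
  refine le_antisymm ?_ (lcmaj_le_lcmaj hK hKS (interior_subset hx) hg hfg)
  simpa only [sub_self, mul_zero, add_zero] using
    lcmaj_le (hKS (interior_subset hx)) (concaveOn_add_mul_sub _ m x hg.1) hline

end LeastConcaveMajorant

theorem stmt_9_general (F G : ℝ → ℝ) (t₀ δ ε : ℝ) (hδ : 0 < δ) (hε : 0 < ε)
    (ht₀ : 0 < t₀ - 2 * δ)
    -- F is a continuous concave distribution function on [0,∞) with F(0) = 0,
    -- strictly concave on [t₀ - 2δ, t₀ + 2δ]
    (hFconc : ConcaveOn ℝ (Set.Ici 0) F)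
    -- G is bounded and uniformly close to F
    (hGF : ∀ x ∈ Set.Ici (0 : ℝ), |G x - F x| < ε)
    -- quantitative strict-concavity gap beating 4ε
    (hgap_pos : 2 * F (t₀ + 3 / 2 * δ) > F (t₀ + δ) + F (t₀ + 2 * δ) + 4 * ε)
    (hgap_neg : 2 * F (t₀ - 3 / 2 * δ) > F (t₀ - δ) + F (t₀ - 2 * δ) + 4 * ε) :
    ∀ x ∈ Set.Icc (t₀ - δ) (t₀ + δ),
      lcmaj (Set.Ici 0) G x = lcmaj (Set.Icc (t₀ - 2 * δ) (t₀ + 2 * δ)) G x := by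
  intro x ⟨hx₁, hx₂⟩
  set K := Icc (t₀ - 2 * δ) (t₀ + 2 * δ)
  have hKS : K ⊆ Ici 0 := fun z hz => ht₀.le.trans hz.1
  have hxK : x ∈ K := ⟨by linarith, by linarith⟩
  have hG_le : ∀ z ∈ Ici (0 : ℝ), G z ≤ F z + ε := fun z hz => by
    linarith [(abs_sub_lt_iff.1 (hGF z hz)).1]
  have hG_ge : ∀ z ∈ Ici (0 : ℝ), F z - ε ≤ G z := fun z hz => by
    linarith [(abs_sub_lt_iff.1 (hGF z hz)).2]
  have hFε : ConcaveOn ℝ K fun z => F z + ε := (hFconc.add_const ε).subset hKS (convex_Icc _ _)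
  refine lcmaj_eq_lcmaj_of_supporting_line (convex_Icc _ _) hKS
    (by rw [interior_Icc]; exact ⟨by linarith, by linarith⟩) (hFconc.add_const ε) hG_le ?_
  intro m hm y hy hyK
  have hx_le : lcmaj K G x ≤ F x + ε := lcmaj_le hxK hFε fun z hz => hG_le z (hKS hz)
  have hq_ge : ∀ q ∈ K, F q - ε ≤ lcmaj K G x + m * (q - x) := fun q hq =>
    (hG_ge q (hKS hq)).trans ((le_lcmaj hq hFε fun z hz => hG_le z (hKS hz)).trans (hm q hq))
  refine (hG_le y hy).trans ?_
  rw [mem_Icc, not_and_or, not_le, not_le] at hyK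
  rcases hyK with hy' | hy'
  · exact hFconc.add_le_of_midpoint_gap_left (p := t₀ - δ) (q := t₀ - 3 / 2 * δ)
      (r := t₀ - 2 * δ) (ht₀.le.trans (by linarith)) hy hx₁ (by linarith) (by ring) hy'.le
      hε.le hx_le (hq_ge _ ⟨by linarith, by linarith⟩) (by linarith)
  · exact hFconc.add_le_of_midpoint_gap (p := t₀ + δ) (q := t₀ + 3 / 2 * δ)
      (r := t₀ + 2 * δ) (ht₀.le.trans (by linarith)) hy hx₂ (by linarith) (by ring) hy'.le
      hε.le hx_le (hq_ge _ ⟨by linarith, by linarith⟩) (by linarith)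

theorem stmt_9 (F G : ℝ → ℝ) (t₀ δ ε : ℝ) (hδ : 0 < δ) (hε : 0 < ε)
    (ht₀ : 0 < t₀ - 2 * δ)
    -- F is a continuous concave distribution function on [0,∞) with F(0) = 0,
    -- strictly concave on [t₀ - 2δ, t₀ + 2δ]
    (hFcont : ContinuousOn F (Set.Ici 0)) (hFmono : MonotoneOn F (Set.Ici 0))
    (hFconc : ConcaveOn ℝ (Set.Ici 0) F) (hF0 : F 0 = 0)
    (hFstrict : StrictConcaveOn ℝ (Set.Icc (t₀ - 2 * δ) (t₀ + 2 * δ)) F)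
    -- G is bounded and uniformly close to F
    (M : ℝ) (hGbd : ∀ x ∈ Set.Ici (0 : ℝ), |G x| ≤ M)
    (hGF : ∀ x ∈ Set.Ici (0 : ℝ), |G x - F x| < ε)
    -- quantitative strict-concavity gap beating 4ε
    (hgap_pos : 2 * F (t₀ + 3 / 2 * δ) > F (t₀ + δ) + F (t₀ + 2 * δ) + 4 * ε)
    (hgap_neg : 2 * F (t₀ - 3 / 2 * δ) > F (t₀ - δ) + F (t₀ - 2 * δ) + 4 * ε) :
    ∀ x ∈ Set.Icc (t₀ - δ) (t₀ + δ),
      lcmaj (Set.Ici 0) G x = lcmaj (Set.Icc (t₀ - 2 * δ) (t₀ + 2 * δ)) G x :=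
  stmt_9_general F G t₀ δ ε hδ hε ht₀ hFconc hGF hgap_pos hgap_neg
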